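/- arXiv:2102.00829 — 2 statements merged into one kernel-verified Lean document; each statement's English description precedes it below -/
import Mathlib

section
/- Let G be a finite group and A a commutative unital ring. Then the quotient A-module Out(A[G]) = Der(A[G])/Inn(A[G]) of outer derivations is isomorphic, as an A-module, to ⨁_{[u]} Hom_Ab(Z(u), A), where the direct sum ranges over all conjugacy classes of G with one representative u chosen in each class, and Z(u) is the centralizer of u in G. -/
set_option maxSynthPendingDepth 3

open MonoidAlgebra

/-- The A-module of derivations of the group ring A[G]. -/
def derSub (A G : Type) [CommRing A] [Group G] :
    Submodule A (MonoidAlgebra A G →ₗ[A] MonoidAlgebra A G) where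
  carrier := {d | ∀ x y, d (x * y) = d x * y + x * d y}
  add_mem' := by
    intro d e hd he x y
    simp only [LinearMap.add_apply, hd x y, he x y, add_mul, mul_add]
    abel
  zero_mem' := by intro x y; simp
  smul_mem' := by
    intro c d hd x y
    simp only [LinearMap.smul_apply, hd x y, smul_add, smul_mul_assoc, mul_smul_comm]

/-- The A-submodule of inner derivations, inside the derivations. -/
def innSub (A G : Type) [CommRing A] [Group G] : Submodule A (derSub A G) where
  carrier := {d | ∃ a : MonoidAlgebra A G,
    ∀ x, (d : MonoidAlgebra A G →ₗ[A] MonoidAlgebra A G) x = a * x - x * a}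
  add_mem' := by
    rintro d e ⟨a, ha⟩ ⟨b, hb⟩
    refine ⟨a + b, fun x => ?_⟩
    simp only [Submodule.coe_add, LinearMap.add_apply, ha x, hb x, add_mul, mul_add]
    abel
  zero_mem' := ⟨0, fun x => by simp⟩
  smul_mem' := by
    rintro c d ⟨a, ha⟩
    refine ⟨c • a, fun x => ?_⟩
    simp only [Submodule.coe_smul, LinearMap.smul_apply, ha x, smul_sub, smul_mul_assoc,
      mul_smul_comm]

/-!
Write `d g = ∑ x, W g x • (x * g)` for an `A`-linear endomorphism `d` of `A[G]`. The Leibniz rule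
for `d` is exactly the identity `W (g * h) x = W g x + W h (g⁻¹ * x * g)`: `W` is a `1`-cocycle of
`G` with values in the functions `G → A`, on which `G` acts by conjugation, and `d` is inner iff
`W` is a coboundary. Since `G → A` splits over the conjugacy classes into modules induced from the
centralizers, Shapiro's lemma turns `H¹` into `⨁ Hom(Z(u), A)`. Concretely, the isomorphism
restricts `W` to the pairs `(z, u)` with `z ∈ Z(u)`; both its injectivity modulo coboundaries and
its inverse come from conjugators `t x · u · (t x)⁻¹ = x`, for which `(t x)⁻¹ * g * t (g⁻¹ * x * g)`
lies in `Z(u)`.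
-/

section ConjCocycle

variable {G M : Type*} [Group G] [AddCommGroup M]

/-- `1`-cocycles of `G` with values in `G → M`, on which `g` acts by
`(g • b) x = b (g⁻¹ * x * g)`. -/
def IsConjCocycle (W : G → G → M) : Prop :=
  ∀ g h x, W (g * h) x = W g x + W h (g⁻¹ * x * g)

def IsConjCoboundary (W : G → G → M) : Prop :=
  ∃ b : G → M, ∀ g x, W g x = b x - b (g⁻¹ * x * g)

lemma Subgroup.inv_mul_mul_of_mem_centralizer_singleton {k u : G}
    (hk : k ∈ Subgroup.centralizer {u}) : k⁻¹ * u * k = u := by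
  rw [mul_assoc, ← Subgroup.mem_centralizer_singleton_iff.mp hk, inv_mul_cancel_left]

lemma ConjClasses.mk_inv_mul_mul (g x : G) : ConjClasses.mk (g⁻¹ * x * g) = ConjClasses.mk x :=
  ConjClasses.mk_eq_mk_iff_isConj.mpr (isConj_iff.mpr ⟨g, by group⟩)

lemma exists_conj_transversal (rep : ConjClasses G → G)
    (hrep : ∀ c, ConjClasses.mk (rep c) = c) :
    ∃ t : G → G, (∀ x, t x * rep (ConjClasses.mk x) * (t x)⁻¹ = x) ∧ ∀ c, t (rep c) = 1 := by
  have h : ∀ x, ∃ s,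
      s * rep (ConjClasses.mk x) * s⁻¹ = x ∧ (x = rep (ConjClasses.mk x) → s = 1) := by
    intro x
    by_cases hx : x = rep (ConjClasses.mk x)
    · exact ⟨1, by simp [← hx], fun _ => rfl⟩
    · obtain ⟨s, hs⟩ := isConj_iff.mp (ConjClasses.mk_eq_mk_iff_isConj.mp (hrep (ConjClasses.mk x)))
      exact ⟨s, hs, fun h => absurd h hx⟩
  choose t ht using h
  exact ⟨t, fun x => (ht x).1, fun c => (ht (rep c)).2 (by rw [hrep])⟩

lemma inv_mul_mul_mem_centralizer {s s' g u x : G} (hs : s * u * s⁻¹ = x)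
    (hs' : s' * u * s'⁻¹ = g⁻¹ * x * g) : s⁻¹ * g * s' ∈ Subgroup.centralizer {u} := by
  subst hs
  have h : s' * u = g⁻¹ * (s * u * s⁻¹) * g * s' := by rw [← hs']; group
  rw [Subgroup.mem_centralizer_singleton_iff]
  calc s⁻¹ * g * s' * u = s⁻¹ * g * (s' * u) := by group
    _ = u * (s⁻¹ * g * s') := by rw [h]; group

namespace IsConjCocycle

variable {W : G → G → M}

lemma apply_one (hW : IsConjCocycle W) (x : G) : W 1 x = 0 := by
  simpa using hW 1 1 x

lemma apply_inv (hW : IsConjCocycle W) (s u : G) : W s⁻¹ u = -W s (s * u * s⁻¹) := by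
  have h := hW s s⁻¹ (s * u * s⁻¹)
  rw [mul_inv_cancel, hW.apply_one, show s⁻¹ * (s * u * s⁻¹) * s = u by group] at h
  exact eq_neg_of_add_eq_zero_right h.symm

def restrict (hW : IsConjCocycle W) (u : G) : Additive (Subgroup.centralizer {u}) →+ M :=
  AddMonoidHom.mk' (fun z => W (z.toMul : G) u) fun z w => by
    simp only [toMul_add, Subgroup.coe_mul, hW _ _ u,
      Subgroup.inv_mul_mul_of_mem_centralizer_singleton z.toMul.2]

@[simp]
lemma restrict_apply (hW : IsConjCocycle W) (u : G) (z : Additive (Subgroup.centralizer {u})) :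
    hW.restrict u z = W (z.toMul : G) u :=
  rfl

lemma restrict_eq_zero_of_isConjCoboundary (hW : IsConjCocycle W) (hB : IsConjCoboundary W)
    (u : G) : hW.restrict u = 0 := by
  obtain ⟨b, hb⟩ := hB
  refine AddMonoidHom.ext fun z => ?_
  simp [hb, Subgroup.inv_mul_mul_of_mem_centralizer_singleton z.toMul.2]

lemma apply_eq_sub (hW : IsConjCocycle W) {g x u s s' : G} (hs : s * u * s⁻¹ = x)
    (hs' : s' * u * s'⁻¹ = g⁻¹ * x * g) (hk : W (s⁻¹ * g * s') u = 0) :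
    W g x = W s x - W s' (g⁻¹ * x * g) := by
  have hku := Subgroup.inv_mul_mul_of_mem_centralizer_singleton (inv_mul_mul_mem_centralizer hs hs')
  subst hs
  calc W g (s * u * s⁻¹) = W (s * ((s⁻¹ * g * s') * s'⁻¹)) (s * u * s⁻¹) := by group
    _ = W s (s * u * s⁻¹) + (W (s⁻¹ * g * s') u + W s'⁻¹ u) := by
      rw [hW, hW, show s⁻¹ * (s * u * s⁻¹) * s = u by group, hku]
    _ = W s (s * u * s⁻¹) - W s' (g⁻¹ * (s * u * s⁻¹) * g) := by
      rw [hk, hW.apply_inv, hs']; abel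

lemma isConjCoboundary_of_restrict_eq_zero (hW : IsConjCocycle W) {rep : ConjClasses G → G}
    {t : G → G} (ht : ∀ x, t x * rep (ConjClasses.mk x) * (t x)⁻¹ = x)
    (h0 : ∀ c, hW.restrict (rep c) = 0) : IsConjCoboundary W := by
  refine ⟨fun y => W (t y) y, fun g x => ?_⟩
  have hy : t (g⁻¹ * x * g) * rep (ConjClasses.mk x) * (t (g⁻¹ * x * g))⁻¹ = g⁻¹ * x * g := by
    simpa only [ConjClasses.mk_inv_mul_mul] using ht (g⁻¹ * x * g)
  exact hW.apply_eq_sub (ht x) hy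
    (DFunLike.congr_fun (h0 (ConjClasses.mk x)) (.ofMul ⟨_, inv_mul_mul_mem_centralizer (ht x) hy⟩))

lemma isConjCoboundary_iff (hW : IsConjCocycle W) {rep : ConjClasses G → G}
    (hrep : ∀ c, ConjClasses.mk (rep c) = c) :
    IsConjCoboundary W ↔ ∀ c, hW.restrict (rep c) = 0 := by
  refine ⟨fun hB c => hW.restrict_eq_zero_of_isConjCoboundary hB (rep c), fun h0 => ?_⟩
  obtain ⟨t, ht, -⟩ := exists_conj_transversal rep hrep
  exact hW.isConjCoboundary_of_restrict_eq_zero ht h0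

end IsConjCocycle

open Classical in
noncomputable def Subgroup.extendByZero (H : Subgroup G) (f : Additive H →+ M) (g : G) : M :=
  if hg : g ∈ H then f (.ofMul ⟨g, hg⟩) else 0

lemma Subgroup.extendByZero_of_mem {H : Subgroup G} (f : Additive H →+ M) {g : G} (hg : g ∈ H) :
    H.extendByZero f g = f (.ofMul ⟨g, hg⟩) :=
  dif_pos hg

lemma Subgroup.extendByZero_mul {H : Subgroup G} (f : Additive H →+ M) {g h : G} (hg : g ∈ H)
    (hh : h ∈ H) : H.extendByZero f (g * h) = H.extendByZero f g + H.extendByZero f h := by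
  rw [extendByZero_of_mem f hg, extendByZero_of_mem f hh, extendByZero_of_mem f (mul_mem hg hh),
    ← map_add]
  rfl

/-- The argument lies in the centralizer by `inv_mul_mul_mem_centralizer`; extending by zero only
makes the definition total. -/
noncomputable def centralizerHomsCocycle (rep : ConjClasses G → G) (t : G → G)
    (f : ∀ c, Additive (Subgroup.centralizer {rep c}) →+ M) (g x : G) : M :=
  (Subgroup.centralizer {rep (ConjClasses.mk x)}).extendByZero (f (ConjClasses.mk x))
    ((t x)⁻¹ * g * t (g⁻¹ * x * g))

variable {rep : ConjClasses G → G} {t : G → G}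

lemma isConjCocycle_centralizerHomsCocycle
    (ht : ∀ x, t x * rep (ConjClasses.mk x) * (t x)⁻¹ = x)
    (f : ∀ c, Additive (Subgroup.centralizer {rep c}) →+ M) :
    IsConjCocycle (centralizerHomsCocycle rep t f) := by
  intro g h x
  have e : h⁻¹ * (g⁻¹ * x * g) * h = (g * h)⁻¹ * x * (g * h) := by group
  have hy := ht (g⁻¹ * x * g)
  have hz := ht ((g * h)⁻¹ * x * (g * h))
  simp only [ConjClasses.mk_inv_mul_mul] at hy hz
  unfold centralizerHomsCocycle
  rw [ConjClasses.mk_inv_mul_mul, e, ← Subgroup.extendByZero_mul _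
    (inv_mul_mul_mem_centralizer (ht x) hy) (inv_mul_mul_mem_centralizer hy (hz.trans e.symm))]
  congr 1
  group

lemma restrict_centralizerHomsCocycle (hrep : ∀ c, ConjClasses.mk (rep c) = c)
    (ht : ∀ x, t x * rep (ConjClasses.mk x) * (t x)⁻¹ = x) (ht1 : ∀ c, t (rep c) = 1)
    (f : ∀ c, Additive (Subgroup.centralizer {rep c}) →+ M) (c : ConjClasses G) :
    (isConjCocycle_centralizerHomsCocycle ht f).restrict (rep c) = f c := by
  refine AddMonoidHom.ext fun z => ?_
  rw [IsConjCocycle.restrict_apply, centralizerHomsCocycle,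
    Subgroup.inv_mul_mul_of_mem_centralizer_singleton z.toMul.2, hrep, ht1, inv_one, one_mul,
    mul_one, Subgroup.extendByZero_of_mem _ z.toMul.2]
  rfl

end ConjCocycle

namespace MonoidAlgebra

variable {A G : Type*} [CommRing A] [Group G]

/-- `d (single g 1) = ∑ x, derivCocycle d g x • single (x * g) 1`. -/
noncomputable def derivCocycle (d : MonoidAlgebra A G →ₗ[A] MonoidAlgebra A G) (g x : G) : A :=
  (d (single g 1)).coeff (x * g)

lemma derivCocycle_injective :
    Function.Injective
      (derivCocycle : (MonoidAlgebra A G →ₗ[A] MonoidAlgebra A G) → G → G → A) := by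
  intro d e h
  refine (basis G A).ext fun g => ?_
  ext p
  simpa [derivCocycle] using congr_fun₂ h g (p * g⁻¹)

lemma map_single_mul_single_iff (d : MonoidAlgebra A G →ₗ[A] MonoidAlgebra A G) (g h : G) :
    d (single g 1 * single h 1) = d (single g 1) * single h 1 + single g 1 * d (single h 1) ↔
      ∀ x, derivCocycle d (g * h) x = derivCocycle d g x + derivCocycle d h (g⁻¹ * x * g) := by
  rw [single_mul_single, one_mul, MonoidAlgebra.ext_iff, Finsupp.ext_iff,
    (Equiv.mulRight (g * h)).symm.forall_congr_left]
  simp only [Equiv.symm_symm, Equiv.coe_mulRight, coeff_add, Finsupp.add_apply,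
    coeff_mul_single_apply, coeff_single_mul_apply, mul_one, one_mul, derivCocycle, ← mul_assoc,
    mul_inv_cancel_right]

lemma isConjCocycle_derivCocycle_iff (d : MonoidAlgebra A G →ₗ[A] MonoidAlgebra A G) :
    IsConjCocycle (derivCocycle d) ↔ ∀ v w, d (v * w) = d v * w + v * d w := by
  refine ⟨fun hW v w => ?_, fun hd g h => (map_single_mul_single_iff d g h).1 (hd _ _)⟩
  induction v using MonoidAlgebra.induction_on with
  | of g =>
    induction w using MonoidAlgebra.induction_on with
    | of h => exact (map_single_mul_single_iff d g h).2 (hW g h)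
    | add w₁ w₂ h₁ h₂ => simp only [mul_add, map_add, h₁, h₂]; abel
    | smul r w hw => simp only [mul_smul_comm, map_smul, hw, smul_add]
  | add v₁ v₂ h₁ h₂ => simp only [add_mul, map_add, h₁, h₂]; abel
  | smul r v hv => simp only [smul_mul_assoc, map_smul, hv, smul_add]

lemma derivCocycle_mulLeft_sub_mulRight (a : MonoidAlgebra A G) (g x : G) :
    derivCocycle (LinearMap.mulLeft A a - LinearMap.mulRight A a) g x
      = a.coeff x - a.coeff (g⁻¹ * x * g) := by
  simp [derivCocycle, mul_assoc]

lemma exists_eq_mul_sub_mul_iff_isConjCoboundary [Finite G]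
    (d : MonoidAlgebra A G →ₗ[A] MonoidAlgebra A G) :
    (∃ a, ∀ v, d v = a * v - v * a) ↔ IsConjCoboundary (derivCocycle d) := by
  constructor
  · rintro ⟨a, ha⟩
    have : d = LinearMap.mulLeft A a - LinearMap.mulRight A a := LinearMap.ext ha
    exact ⟨a.coeff, by simp [this, derivCocycle_mulLeft_sub_mulRight]⟩
  · rintro ⟨b, hb⟩
    refine ⟨ofCoeff (Finsupp.equivFunOnFinite.symm b), fun v => ?_⟩
    have : d = LinearMap.mulLeft A (ofCoeff (Finsupp.equivFunOnFinite.symm b))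
        - LinearMap.mulRight A (ofCoeff (Finsupp.equivFunOnFinite.symm b)) :=
      derivCocycle_injective (funext₂ fun g x => by simp [hb, derivCocycle_mulLeft_sub_mulRight])
    rw [this]; rfl

noncomputable def ofDerivCocycle [Finite G] (W : G → G → A) :
    MonoidAlgebra A G →ₗ[A] MonoidAlgebra A G :=
  (basis G A).constr A fun g => ofCoeff (Finsupp.equivFunOnFinite.symm fun p => W g (p * g⁻¹))

lemma derivCocycle_ofDerivCocycle [Finite G] (W : G → G → A) :
    derivCocycle (ofDerivCocycle W) = W := by
  funext g x
  rw [derivCocycle, ofDerivCocycle, ← basis_apply, Module.Basis.constr_basis]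
  simp

end MonoidAlgebra

section OuterDerivations

variable {A G : Type} [CommRing A] [Group G]

lemma isConjCocycle_derivCocycle (d : derSub A G) :
    IsConjCocycle (derivCocycle (d : MonoidAlgebra A G →ₗ[A] MonoidAlgebra A G)) :=
  (isConjCocycle_derivCocycle_iff _).2 d.2

noncomputable def restrictToCentralizers (rep : ConjClasses G → G) :
    derSub A G →ₗ[A] ∀ c, Additive (Subgroup.centralizer {rep c}) →+ A where
  toFun d c := (isConjCocycle_derivCocycle d).restrict (rep c)
  map_add' _ _ := rfl
  map_smul' _ _ := rfl

lemma ker_restrictToCentralizers [Finite G] {rep : ConjClasses G → G}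
    (hrep : ∀ c, ConjClasses.mk (rep c) = c) :
    LinearMap.ker (restrictToCentralizers (A := A) rep) = innSub A G := by
  ext d
  rw [LinearMap.mem_ker, funext_iff]
  exact ((isConjCocycle_derivCocycle d).isConjCoboundary_iff hrep).symm.trans
    (exists_eq_mul_sub_mul_iff_isConjCoboundary _).symm

lemma restrictToCentralizers_surjective [Finite G] {rep : ConjClasses G → G}
    (hrep : ∀ c, ConjClasses.mk (rep c) = c) :
    Function.Surjective (restrictToCentralizers (A := A) rep) := by
  intro f
  obtain ⟨t, ht, ht1⟩ := exists_conj_transversal rep hrep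
  have hW := isConjCocycle_centralizerHomsCocycle ht f
  have hd := derivCocycle_ofDerivCocycle (centralizerHomsCocycle rep t f)
  refine ⟨⟨ofDerivCocycle _, (isConjCocycle_derivCocycle_iff _).1 (hd ▸ hW)⟩, funext fun c => ?_⟩
  rw [← restrict_centralizerHomsCocycle hrep ht ht1 f c]
  exact AddMonoidHom.ext fun z => congr_fun₂ hd _ _

end OuterDerivations

/-- **Outer derivations of a finite group ring.**
If `G` is a finite group and `A` is a commutative unital ring, then
`Out(A[G]) = Der(A[G])/Inn(A[G]) ≅ ⨁_{[u]} Hom_Ab(Z(u), A)` as `A`-modules,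
the sum ranging over the conjugacy classes of `G` with chosen representatives. -/
theorem out_decomposition_of_finite_group
    (A G : Type) [CommRing A] [Group G] [Finite G]
    (rep : ConjClasses G → G) (hrep : ∀ c, ConjClasses.mk (rep c) = c) :
    Nonempty (((derSub A G) ⧸ (innSub A G)) ≃ₗ[A]
        (DirectSum (ConjClasses G)
          fun c => (Additive (Subgroup.centralizer {rep c} : Subgroup G) →+ A))) := by
  have : Fintype (ConjClasses G) := Fintype.ofFinite _
  exact ⟨(Submodule.quotEquivOfEq _ _ (ker_restrictToCentralizers hrep).symm).trans
    ((LinearMap.quotKerEquivOfSurjective _ (restrictToCentralizers_surjective hrep)).trans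
      (DirectSum.linearEquivFunOnFintype A _ _).symm)⟩
end

section
/- Let G be a finite group and A a commutative unital ring. A derivation d of A[G] is inner if and only if (d ĝ)(h) = 0 for all g, h ∈ G with gh = hg (i.e. if and only if d is weakly inner). -/
open MonoidAlgebra

/-- `d` is a derivation of the group ring `A[G]`: an `A`-linear endomorphism
satisfying the Leibniz rule. -/
def IsGroupRingDerivation {A G : Type} [CommRing A] [Group G]
    (d : MonoidAlgebra A G →ₗ[A] MonoidAlgebra A G) : Prop :=
  ∀ x y : MonoidAlgebra A G, d (x * y) = d x * y + x * d y

/-- `d` is an inner derivation of `A[G]`: `d x = a*x - x*a` for some `a ∈ A[G]`. -/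
def IsInnerDerivation {A G : Type} [CommRing A] [Group G]
    (d : MonoidAlgebra A G →ₗ[A] MonoidAlgebra A G) : Prop :=
  ∃ a : MonoidAlgebra A G, ∀ x : MonoidAlgebra A G, d x = a * x - x * a

/-- `d` is weakly inner: the coefficient of `h` in `d ĝ` vanishes whenever `g` and `h`
commute (the character of `d` is trivial on loops). -/
def IsWeaklyInnerDerivation {A G : Type} [CommRing A] [Group G]
    (d : MonoidAlgebra A G →ₗ[A] MonoidAlgebra A G) : Prop :=
  ∀ g h : G, g * h = h * g → (d (MonoidAlgebra.of A G g)).coeff h = 0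

/-!
For a derivation `d`, the map `g ↦ d(ĝ) ĝ⁻¹` is a `1`-cocycle of `G` with values in `A[G]`
under conjugation, and `d` is inner exactly when this cocycle is a coboundary. Under conjugation
`A[G]` is the permutation module on the set `G`, so by Shapiro's lemma the cocycle is a coboundary
as soon as, for every `t`, its `t`-coordinate vanishes on the centraliser of `t`; this is weak
innerness. Finiteness of `G` makes the resulting potential a finitely supported element of `A[G]`.
-/

namespace MulAction

variable {H X M : Type*} [Group H] [MulAction H X] [AddCommGroup M]

theorem cocycle_eq_of_smul_eq {f : H → X → M}
    (hf : ∀ g h x, f (g * h) x = f g x + f h (g⁻¹ • x))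
    (hstab : ∀ g x, g • x = x → f g x = 0) {y y' : H} {r x : X}
    (hy : y • r = x) (hy' : y' • r = x) : f y x = f y' x := by
  have hfix : (y'⁻¹ * y) • r = r := by rw [mul_smul, hy, ← hy', inv_smul_smul]
  have hx : y'⁻¹ • x = r := by rw [← hy', inv_smul_smul]
  calc f y x = f (y' * (y'⁻¹ * y)) x := by rw [mul_inv_cancel_left]
    _ = f y' x := by rw [hf, hx, hstab _ _ hfix, add_zero]

theorem exists_eq_sub_of_cocycle (f : H → X → M)
    (hf : ∀ g h x, f (g * h) x = f g x + f h (g⁻¹ • x))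
    (hstab : ∀ g x, g • x = x → f g x = 0) :
    ∃ a : X → M, ∀ g x, f g x = a x - a (g⁻¹ • x) := by
  let rep : X → X := fun x => (Quotient.mk (orbitRel H X) x).out
  have rep_smul (g : H) (x : X) : rep (g • x) = rep x := by
    simp only [rep]
    congr 1
    exact Quotient.sound (mem_orbit x g)
  have exists_smul_rep (x : X) : ∃ σ : H, σ • rep x = x :=
    mem_orbit_iff.mp (Setoid.symm' _ (Quotient.mk_out (s := orbitRel H X) x))
  choose σ hσ using exists_smul_rep
  refine ⟨fun x => f (σ x) x, fun g x => ?_⟩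
  have htransport : (g⁻¹ * σ x) • rep (g⁻¹ • x) = g⁻¹ • x := by
    rw [rep_smul, mul_smul, hσ]
  calc f g x = f (g * (g⁻¹ * σ x)) x - f (g⁻¹ * σ x) (g⁻¹ • x) := by rw [hf]; abel
    _ = f (σ x) x - f (σ (g⁻¹ • x)) (g⁻¹ • x) := by
      rw [mul_inv_cancel_left, cocycle_eq_of_smul_eq hf hstab htransport (hσ _)]

end MulAction

namespace MonoidAlgebra

variable {A G : Type} [CommRing A] [Group G]

theorem coeff_mul_of_sub_of_mul (a : MonoidAlgebra A G) (g h : G) :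
    (a * of A G g - of A G g * a).coeff h = a.coeff (h * g⁻¹) - a.coeff (g⁻¹ * h) := by
  simp [of_apply]

end MonoidAlgebra

section GroupRingDerivation

variable {A G : Type} [CommRing A] [Group G] (d : MonoidAlgebra A G →ₗ[A] MonoidAlgebra A G)

/-- The coefficient function of `d ĝ · ĝ⁻¹`. -/
noncomputable def conjCocycle (c : ConjAct G) (t : G) : A :=
  (d (of A G (ConjAct.ofConjAct c))).coeff (t * ConjAct.ofConjAct c)

variable {d}

theorem IsGroupRingDerivation.conjCocycle_mul (hd : IsGroupRingDerivation d) (c c' : ConjAct G)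
    (t : G) : conjCocycle d (c * c') t = conjCocycle d c t + conjCocycle d c' (c⁻¹ • t) := by
  unfold conjCocycle
  rw [ConjAct.ofConjAct_mul, map_mul (of A G), hd, coeff_add, Finsupp.add_apply]
  congr 1
  · simp [of_apply, mul_assoc]
  · simp [of_apply, ConjAct.smul_def, mul_assoc]

theorem IsWeaklyInnerDerivation.conjCocycle_eq_zero (hw : IsWeaklyInnerDerivation d)
    (c : ConjAct G) (t : G) (hct : c • t = t) : conjCocycle d c t = 0 := by
  rw [ConjAct.smul_def, mul_inv_eq_iff_eq_mul] at hct
  exact hw _ _ (by rw [← mul_assoc, hct, mul_assoc])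

theorem IsInnerDerivation.isWeaklyInnerDerivation (hd : IsInnerDerivation d) :
    IsWeaklyInnerDerivation d := by
  obtain ⟨a, ha⟩ := hd
  intro g h hgh
  have hcomm : h * g⁻¹ = g⁻¹ * h := by
    rw [mul_inv_eq_iff_eq_mul, mul_assoc, ← hgh, inv_mul_cancel_left]
  rw [ha, coeff_mul_of_sub_of_mul, hcomm, sub_self]

theorem isInnerDerivation_of_forall_of (a : MonoidAlgebra A G)
    (ha : ∀ g : G, d (of A G g) = a * of A G g - of A G g * a) : IsInnerDerivation d := by
  have hd : d = LinearMap.mulLeft A a - LinearMap.mulRight A a :=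
    lhom_ext' fun g => LinearMap.ext_ring (by simpa [of_apply] using ha g)
  exact ⟨a, fun x => by rw [hd]; rfl⟩

end GroupRingDerivation

/-- For a finite group `G` and a commutative unital ring `A`, a derivation of `A[G]` is
inner if and only if it is weakly inner. -/
theorem inner_iff_weakly_inner_of_finite
    (A G : Type) [CommRing A] [Group G] [Finite G]
    (d : MonoidAlgebra A G →ₗ[A] MonoidAlgebra A G)
    (hd : IsGroupRingDerivation d) :
    IsInnerDerivation d ↔ IsWeaklyInnerDerivation d := by
  refine ⟨IsInnerDerivation.isWeaklyInnerDerivation, fun hw => ?_⟩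
  obtain ⟨a, ha⟩ := MulAction.exists_eq_sub_of_cocycle (conjCocycle d) hd.conjCocycle_mul
    hw.conjCocycle_eq_zero
  have := Fintype.ofFinite G
  refine isInnerDerivation_of_forall_of (ofCoeff (Finsupp.equivFunOnFinite.symm a)) fun g => ?_
  ext h
  rw [coeff_mul_of_sub_of_mul]
  simpa [conjCocycle, ConjAct.smul_def] using ha (ConjAct.toConjAct g) (h * g⁻¹)
end
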